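/- arXiv:2403.18297 — 4 statements merged into one kernel-verified Lean document; each statement's English description precedes it below -/
import Mathlib

section
/- Let f : (0,1) → ℝ be twice differentiable, let S(x) = 1/(1+e^{-x}) be the sigmoid function, and let a(l) = (e^l − 1)/(2(e^l + 1)). Then for every l ∈ ℝ one has a(l)·(f∘S)'(l) + (1/2)·(f∘S)''(l) = (1/2)·S(l)²·(1−S(l))²·f''(S(l)); that is, the operator ℒ̂ = a(l)∂_l + (1/2)∂_{ll} applied to f∘S agrees with (𝒜f)∘S, where (𝒜f)(π) = (1/2)π²(1−π)²f''(π). -/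
/-!
The sigmoid solves the logistic equation `S' = S (1 - S)`. For any `φ` with `φ' = ψ ∘ φ` the
chain and product rules give `(f ∘ φ)'' = (f'' ∘ φ) (ψ ∘ φ)² + (f' ∘ φ) (ψ' ∘ φ) (ψ ∘ φ)`, while
`(f ∘ φ)' = (f' ∘ φ) (ψ ∘ φ)`. The drift `a = S - 1/2 = -(1/2) ψ' ∘ S` of the logistic field
`ψ p = p (1 - p)` is exactly what cancels the first-order term.
-/

open Real Set

section AutonomousODE

variable {f φ ψ : ℝ → ℝ}

theorem deriv_comp_eq_of_hasDerivAt (hφ : ∀ x, HasDerivAt φ (ψ (φ x)) x)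
    (hf : ∀ x, DifferentiableAt ℝ f (φ x)) :
    deriv (f ∘ φ) = fun x => deriv f (φ x) * ψ (φ x) :=
  funext fun x => ((hf x).hasDerivAt.comp x (hφ x)).deriv

theorem deriv_deriv_comp_eq_of_hasDerivAt {ψ' : ℝ → ℝ} (hφ : ∀ x, HasDerivAt φ (ψ (φ x)) x)
    (hf : ∀ x, DifferentiableAt ℝ f (φ x)) {x : ℝ}
    (hf' : DifferentiableAt ℝ (deriv f) (φ x)) (hψ : HasDerivAt ψ (ψ' (φ x)) (φ x)) :
    deriv (deriv (f ∘ φ)) x =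
      deriv (deriv f) (φ x) * ψ (φ x) ^ 2 + deriv f (φ x) * ψ' (φ x) * ψ (φ x) := by
  rw [deriv_comp_eq_of_hasDerivAt hφ hf]
  have hf'φ := hf'.hasDerivAt.comp x (hφ x)
  have hψφ := hψ.comp x (hφ x)
  exact (hf'φ.mul hψφ).deriv.trans (by simp only [Function.comp_apply]; ring)

end AutonomousODE

theorem Real.sigmoid_sub_half (x : ℝ) :
    sigmoid x - 1 / 2 = (exp x - 1) / (2 * (exp x + 1)) := by
  have hexp : exp x ≠ 0 := (exp_pos x).ne'
  rw [sigmoid_def, exp_neg]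
  field_simp
  ring

/-- For a twice differentiable `f : (0,1) → ℝ`, with `S` the sigmoid and
`a l = (e^l - 1)/(2(e^l + 1))`, we have
`a l * (f ∘ S)' l + (1/2) * (f ∘ S)'' l = (1/2) * S l ^ 2 * (1 - S l) ^ 2 * f'' (S l)`. -/
theorem generator_relation_sigmoid
    (f : ℝ → ℝ)
    (hf : ∀ x ∈ Set.Ioo (0 : ℝ) 1, DifferentiableAt ℝ f x)
    (hf' : ∀ x ∈ Set.Ioo (0 : ℝ) 1, DifferentiableAt ℝ (deriv f) x)
    (S : ℝ → ℝ) (hS : S = fun x => 1 / (1 + Real.exp (-x)))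
    (a : ℝ → ℝ) (ha : a = fun l => (Real.exp l - 1) / (2 * (Real.exp l + 1)))
    (l : ℝ) :
    a l * deriv (f ∘ S) l + (1 / 2) * deriv (deriv (f ∘ S)) l
      = (1 / 2) * (S l) ^ 2 * (1 - S l) ^ 2 * deriv (deriv f) (S l) := by
  replace hS : S = sigmoid := by rw [hS]; ext x; rw [sigmoid_def, one_div]
  subst hS
  have ha' : a l = sigmoid l - 1 / 2 := by rw [ha, sigmoid_sub_half]
  have hfS : ∀ x, DifferentiableAt ℝ f (sigmoid x) :=
    fun x => hf _ ⟨sigmoid_pos x, sigmoid_lt_one x⟩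
  have hlogistic : HasDerivAt (fun p : ℝ => p * (1 - p)) (1 - 2 * sigmoid l) (sigmoid l) :=
    ((hasDerivAt_id' _).mul ((hasDerivAt_id' _).const_sub 1)).congr_deriv (by ring)
  rw [deriv_deriv_comp_eq_of_hasDerivAt (ψ' := fun p => 1 - 2 * p) hasDerivAt_sigmoid hfS
      (hf' _ ⟨sigmoid_pos l, sigmoid_lt_one l⟩) hlogistic,
    deriv_comp_eq_of_hasDerivAt (ψ := fun p => p * (1 - p)) hasDerivAt_sigmoid hfS,
    ha']
  ring
end

section
/- Let β > 0 and let g : (0,1) → ℝ be twice differentiable with |g''(u)| ≤ 2β/(u²(1−u)²) for all u ∈ (0,1). Then there exists a constant M ≥ 0 such that π(1−π)·|g'(π)| ≤ M for every π ∈ (0,1). -/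
/-!
With `φ x = (1 - x)⁻¹ - x⁻¹` one has `φ' x = x⁻² + (1 - x)⁻² ≥ (x (1 - x))⁻² / 2`, so `4βφ'`
dominates `|g''|` on `(0, 1)`. Comparing derivatives, `|g' p - g' (1/2)| ≤ 4β |φ p|`, and
`p (1 - p) φ p = 2p - 1` is bounded.
-/

open Set

theorem abs_sub_le_abs_sub_of_abs_deriv_le {D : Set ℝ} (hD : Convex ℝ D) {f f' φ φ' : ℝ → ℝ}
    (hf : ∀ x ∈ D, HasDerivAt f (f' x) x) (hφ : ∀ x ∈ D, HasDerivAt φ (φ' x) x)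
    (hle : ∀ x ∈ D, |f' x| ≤ φ' x) {a b : ℝ} (ha : a ∈ D) (hb : b ∈ D) :
    |f b - f a| ≤ |φ b - φ a| := by
  have monotoneOn_of_deriv_nonneg {F F' : ℝ → ℝ} (hF : ∀ x ∈ D, HasDerivAt F (F' x) x)
      (hF' : ∀ x ∈ D, 0 ≤ F' x) : MonotoneOn F D :=
    monotoneOn_of_hasDerivWithinAt_nonneg hD
      (fun x hx ↦ (hF x hx).continuousAt.continuousWithinAt)
      (fun x hx ↦ (hF x (interior_subset hx)).hasDerivWithinAt)
      (fun x hx ↦ hF' x (interior_subset hx))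
  have hsub : MonotoneOn (fun x ↦ φ x - f x) D :=
    monotoneOn_of_deriv_nonneg (fun x hx ↦ (hφ x hx).sub (hf x hx))
      (fun x hx ↦ by linarith [le_abs_self (f' x), hle x hx])
  have hadd : MonotoneOn (fun x ↦ φ x + f x) D :=
    monotoneOn_of_deriv_nonneg (fun x hx ↦ (hφ x hx).add (hf x hx))
      (fun x hx ↦ by linarith [neg_abs_le (f' x), hle x hx])
  rcases le_total a b with hab | hba
  · have h₁ : φ a - f a ≤ φ b - f b := hsub ha hb hab
    have h₂ : φ a + f a ≤ φ b + f b := hadd ha hb hab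
    rw [abs_sub_le_iff, abs_of_nonneg (by linarith)]
    constructor <;> linarith
  · have h₁ : φ b - f b ≤ φ a - f a := hsub hb ha hba
    have h₂ : φ b + f b ≤ φ a + f a := hadd hb ha hba
    rw [abs_sub_le_iff, abs_of_nonpos (by linarith)]
    constructor <;> linarith

theorem inv_sq_mul_one_sub_sq_le {x : ℝ} (hx₀ : x ≠ 0) (hx₁ : 1 - x ≠ 0) :
    (x ^ 2 * (1 - x) ^ 2)⁻¹ ≤ 2 * ((x ^ 2)⁻¹ + ((1 - x) ^ 2)⁻¹) := by
  rw [inv_add_inv (by positivity) (by positivity), ← mul_div_assoc, mul_comm (x ^ 2),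
    inv_eq_one_div, div_le_div_iff_of_pos_right (by positivity)]
  nlinarith [sq_nonneg (2 * x - 1)]

theorem hasDerivAt_inv_one_sub_sub_inv {x : ℝ} (hx₀ : x ≠ 0) (hx₁ : 1 - x ≠ 0) :
    HasDerivAt (fun x ↦ (1 - x)⁻¹ - x⁻¹) (((1 - x) ^ 2)⁻¹ + (x ^ 2)⁻¹) x := by
  refine ((((hasDerivAt_id' x).const_sub 1).fun_inv hx₁).fun_sub
    (hasDerivAt_inv hx₀)).congr_deriv ?_
  ring

theorem mul_one_sub_mul_abs_inv_one_sub_sub_inv_le {x : ℝ} (hx : x ∈ Ioo (0 : ℝ) 1) :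
    x * (1 - x) * |(1 - x)⁻¹ - x⁻¹| ≤ 1 := by
  have hx₁ : 0 < 1 - x := sub_pos.2 hx.2
  have hid : x * (1 - x) * ((1 - x)⁻¹ - x⁻¹) = 2 * x - 1 := by
    field_simp [hx.1.ne', hx₁.ne']
    ring
  rw [← abs_of_pos (mul_pos hx.1 hx₁), ← abs_mul, hid, abs_le]
  constructor <;> linarith [hx.1, hx.2]

theorem weighted_derivative_bounded_general
    (β : ℝ) (hβ : 0 < β) (g : ℝ → ℝ)
    (hg' : ∀ u ∈ Set.Ioo (0 : ℝ) 1, DifferentiableAt ℝ (deriv g) u)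
    (hbound : ∀ u ∈ Set.Ioo (0 : ℝ) 1,
      |deriv (deriv g) u| ≤ 2 * β / (u ^ 2 * (1 - u) ^ 2)) :
    ∃ M : ℝ, 0 ≤ M ∧ ∀ p ∈ Set.Ioo (0 : ℝ) 1, p * (1 - p) * |deriv g p| ≤ M := by
  refine ⟨|deriv g (1 / 2)| + 4 * β, by positivity, fun p hp ↦ ?_⟩
  have hne {x : ℝ} (hx : x ∈ Ioo (0 : ℝ) 1) : x ≠ 0 ∧ 1 - x ≠ 0 :=
    ⟨hx.1.ne', (sub_pos.2 hx.2).ne'⟩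
  have hcompare : |deriv g p - deriv g (1 / 2)| ≤
      |4 * β * ((1 - p)⁻¹ - p⁻¹) - 4 * β * ((1 - 1 / 2)⁻¹ - (1 / 2)⁻¹)| := by
    refine abs_sub_le_abs_sub_of_abs_deriv_le (convex_Ioo 0 1)
      (fun x hx ↦ (hg' x hx).hasDerivAt)
      (fun x hx ↦ (hasDerivAt_inv_one_sub_sub_inv (hne hx).1 (hne hx).2).const_mul (4 * β))
      (fun x hx ↦ ?_) (by norm_num) hp
    calc |deriv (deriv g) x| ≤ 2 * β * (x ^ 2 * (1 - x) ^ 2)⁻¹ := hbound x hx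
      _ ≤ 2 * β * (2 * ((x ^ 2)⁻¹ + ((1 - x) ^ 2)⁻¹)) := by
        gcongr
        exact inv_sq_mul_one_sub_sq_le (hne hx).1 (hne hx).2
      _ = 4 * β * (((1 - x) ^ 2)⁻¹ + (x ^ 2)⁻¹) := by ring
  rw [show (1 - 1 / 2 : ℝ)⁻¹ - (1 / 2)⁻¹ = 0 by norm_num, mul_zero, sub_zero, abs_mul,
    abs_of_pos (by positivity : (0 : ℝ) < 4 * β)] at hcompare
  have hweight := mul_one_sub_mul_abs_inv_one_sub_sub_inv_le hp
  have hp₀ : 0 ≤ p * (1 - p) := mul_nonneg hp.1.le (sub_pos.2 hp.2).le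
  calc p * (1 - p) * |deriv g p|
      ≤ p * (1 - p) * (|deriv g (1 / 2)| + 4 * β * |(1 - p)⁻¹ - p⁻¹|) := by
        gcongr
        linarith [abs_sub_abs_le_abs_sub (deriv g p) (deriv g (1 / 2))]
    _ ≤ 1 * |deriv g (1 / 2)| + 4 * β * 1 := by
        have hp₁ : p * (1 - p) ≤ 1 := by nlinarith [hp.1, hp.2]
        nlinarith [mul_le_mul_of_nonneg_right hp₁ (abs_nonneg (deriv g (1 / 2))),
          mul_le_mul_of_nonneg_left hweight (by positivity : (0 : ℝ) ≤ 4 * β)]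
    _ = |deriv g (1 / 2)| + 4 * β := by ring

/-- If `g` is twice differentiable on `(0,1)` with
`|g''(u)| ≤ 2β/(u²(1-u)²)`, then `p(1-p)|g'(p)|` is uniformly bounded on `(0,1)`. -/
theorem weighted_derivative_bounded
    (β : ℝ) (hβ : 0 < β) (g : ℝ → ℝ)
    (hg : ∀ u ∈ Set.Ioo (0 : ℝ) 1, DifferentiableAt ℝ g u)
    (hg' : ∀ u ∈ Set.Ioo (0 : ℝ) 1, DifferentiableAt ℝ (deriv g) u)
    (hbound : ∀ u ∈ Set.Ioo (0 : ℝ) 1,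
      |deriv (deriv g) u| ≤ 2 * β / (u ^ 2 * (1 - u) ^ 2)) :
    ∃ M : ℝ, 0 ≤ M ∧ ∀ p ∈ Set.Ioo (0 : ℝ) 1, p * (1 - p) * |deriv g p| ≤ M :=
  weighted_derivative_bounded_general β hβ g hg' hbound
end

section
/- Let T > 0 and let f, f_n : [0,T] → [0,∞) be continuous functions with f(0) = f_n(0) = 0 for all n, each f_n non-decreasing, and f strictly increasing. Fix t ∈ [0,T] and define t_n := inf({s ∈ [0,T] : f_n(s) ≥ f(t)} ∪ {T}). If f_n → f pointwise on [0,T], then t_n → t as n → ∞. -/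
open Filter

/-- Let `f, fₙ : [0,T] → [0,∞)` be continuous with `f 0 = fₙ 0 = 0`,
`fₙ` non-decreasing, `f` strictly increasing, and `fₙ → f` pointwise on `[0,T]`.
For fixed `t ∈ [0,T]` define `tₙ := inf({s ∈ [0,T] : fₙ s ≥ f t} ∪ {T})`. Then `tₙ → t`. -/
theorem hitting_level_time_convergence
    (T : ℝ) (hT : 0 < T) (f : ℝ → ℝ) (fn : ℕ → ℝ → ℝ)
    (hf_cont : ContinuousOn f (Set.Icc 0 T))
    (hfn_cont : ∀ n, ContinuousOn (fn n) (Set.Icc 0 T))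
    (hf_nonneg : ∀ s ∈ Set.Icc (0 : ℝ) T, 0 ≤ f s)
    (hfn_nonneg : ∀ n, ∀ s ∈ Set.Icc (0 : ℝ) T, 0 ≤ fn n s)
    (hf0 : f 0 = 0) (hfn0 : ∀ n, fn n 0 = 0)
    (hfn_mono : ∀ n, MonotoneOn (fn n) (Set.Icc 0 T))
    (hf_strict : StrictMonoOn f (Set.Icc 0 T))
    (hconv : ∀ s ∈ Set.Icc (0 : ℝ) T,
      Tendsto (fun n => fn n s) atTop (nhds (f s)))
    (t : ℝ) (ht : t ∈ Set.Icc (0 : ℝ) T)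
    (tn : ℕ → ℝ)
    (htn : ∀ n, tn n = sInf ({s ∈ Set.Icc (0 : ℝ) T | f t ≤ fn n s} ∪ {T})) :
    Tendsto tn atTop (nhds t) := by
  set S : ℕ → Set ℝ := fun n => {s ∈ Set.Icc (0 : ℝ) T | f t ≤ fn n s} ∪ {T} with hS
  have hne : ∀ n, (S n).Nonempty := fun n => ⟨T, Or.inr rfl⟩
  have hbdd : ∀ n, BddBelow (S n) := by
    intro n
    refine ⟨0, ?_⟩
    rintro s (⟨⟨hs0, _⟩, _⟩ | rfl)
    · exact hs0
    · exact hT.le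
  have h0le : ∀ n, 0 ≤ tn n := by
    intro n; rw [htn n]
    refine le_csInf (hne n) ?_
    rintro s (⟨⟨hs0, _⟩, _⟩ | rfl)
    · exact hs0
    · exact hT.le
  have hleT : ∀ n, tn n ≤ T := by
    intro n; rw [htn n]
    exact csInf_le (hbdd n) (Or.inr rfl)
  rw [Metric.tendsto_nhds]
  intro ε hε
  have hε2 : 0 < ε / 2 := by positivity
  have hlow : ∀ᶠ n in atTop, t - ε / 2 ≤ tn n := by
    rcases lt_or_ge t (ε / 2) with hc | hc
    · filter_upwards with n
      have := h0le n; linarith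
    · have hmem : t - ε / 2 ∈ Set.Icc (0 : ℝ) T := ⟨by linarith, by linarith [ht.2]⟩
      have hflt : f (t - ε / 2) < f t := hf_strict hmem ht (by linarith)
      filter_upwards [(hconv _ hmem).eventually_lt_const hflt] with n hn
      rw [htn n]
      refine le_csInf (hne n) ?_
      rintro s (⟨hsIcc, hfs⟩ | rfl)
      · by_contra h
        push_neg at h
        have : fn n s ≤ fn n (t - ε / 2) := hfn_mono n hsIcc hmem h.le
        linarith
      · linarith [ht.2]
  have hup : ∀ᶠ n in atTop, tn n ≤ t + ε / 2 := by
    rcases lt_or_eq_of_le ht.2 with hc | hc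
    · have hs₀mem : min (t + ε / 2) T ∈ Set.Icc (0 : ℝ) T :=
        ⟨le_min (by linarith [ht.1]) hT.le, min_le_right _ _⟩
      have hts₀ : t < min (t + ε / 2) T := lt_min (by linarith) hc
      have hflt : f t < f (min (t + ε / 2) T) := hf_strict ht hs₀mem hts₀
      filter_upwards [(hconv _ hs₀mem).eventually_const_lt hflt] with n hn
      rw [htn n]
      calc sInf (S n) ≤ min (t + ε / 2) T := csInf_le (hbdd n) (Or.inl ⟨hs₀mem, hn.le⟩)
        _ ≤ t + ε / 2 := min_le_left _ _
    · filter_upwards with n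
      have := hleT n; linarith [hc]
  filter_upwards [hlow, hup] with n h1 h2
  rw [Real.dist_eq, abs_sub_lt_iff]
  constructor <;> linarith
end

section
/- Let T > 0 and let ξ, ξ_n : [0,T] → [0,∞) be continuous functions with ξ(0) = ξ_n(0) = 0, each ξ_n non-decreasing, ξ strictly increasing, and ξ_n → ξ pointwise on [0,T]. Define ξ^{-1}(y) := inf({x ∈ [0,T] : ξ(x) ≥ y} ∪ {T}). Then for every ε ∈ (0,T), sup_{t ∈ [0,T−ε]} |ξ^{-1}(ξ_n(t)) − t| → 0 as n → ∞. -/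
open Filter

/-- Let `ξ, ξₙ : [0,T] → [0,∞)` be continuous with `ξ 0 = ξₙ 0 = 0`,
`ξₙ` non-decreasing, `ξ` strictly increasing, and `ξₙ → ξ` pointwise on `[0,T]`.
With `ξ⁻¹(y) := inf({x ∈ [0,T] : ξ x ≥ y} ∪ {T})`, for every `ε ∈ (0,T)` we have
`sup_{t ∈ [0,T-ε]} |ξ⁻¹(ξₙ t) - t| → 0`, i.e. `ξ⁻¹ ∘ ξₙ → id` uniformly on `[0, T-ε]`. -/
theorem inverse_clock_uniform_convergence
    (T : ℝ) (hT : 0 < T) (ξ : ℝ → ℝ) (ξn : ℕ → ℝ → ℝ)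
    (hξ_cont : ContinuousOn ξ (Set.Icc 0 T))
    (hξn_cont : ∀ n, ContinuousOn (ξn n) (Set.Icc 0 T))
    (hξ_nonneg : ∀ s ∈ Set.Icc (0 : ℝ) T, 0 ≤ ξ s)
    (hξn_nonneg : ∀ n, ∀ s ∈ Set.Icc (0 : ℝ) T, 0 ≤ ξn n s)
    (hξ0 : ξ 0 = 0) (hξn0 : ∀ n, ξn n 0 = 0)
    (hξn_mono : ∀ n, MonotoneOn (ξn n) (Set.Icc 0 T))
    (hξ_strict : StrictMonoOn ξ (Set.Icc 0 T))
    (hconv : ∀ s ∈ Set.Icc (0 : ℝ) T,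
      Tendsto (fun n => ξn n s) atTop (nhds (ξ s)))
    (ξinv : ℝ → ℝ)
    (hξinv : ∀ y, ξinv y = sInf ({x ∈ Set.Icc (0 : ℝ) T | y ≤ ξ x} ∪ {T}))
    (ε : ℝ) (hε : ε ∈ Set.Ioo (0 : ℝ) T) :
    TendstoUniformlyOn (fun n t => ξinv (ξn n t)) (fun t => t) atTop
      (Set.Icc (0 : ℝ) (T - ε)) := by

  have hεT := hε.2
  have hε0 := hε.1
  have hTε : (0:ℝ) ≤ T - ε := by linarith
  have hξ_mono : MonotoneOn ξ (Set.Icc 0 T) := hξ_strict.monotoneOn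
  rw [Metric.tendstoUniformlyOn_iff]
  intro δ' hδ'
  set δ : ℝ := min (δ'/2) ε with hδdef
  have hδpos : 0 < δ := lt_min (by linarith) hε0
  have hδε : δ ≤ ε := min_le_right _ _
  have hδδ' : δ < δ' := lt_of_le_of_lt (min_le_left _ _) (by linarith)
  set h : ℝ := δ / 2 with hhdef
  have hpos : 0 < h := by positivity
  set N : ℕ := ⌈(T - ε) / h⌉₊ with hNdef
  have hNh : (N : ℝ) * h ≤ T - ε + h := by
    have h1 : (N : ℝ) < (T - ε) / h + 1 :=
      Nat.ceil_lt_add_one (div_nonneg hTε hpos.le)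
    have h2 : (T - ε) / h * h = T - ε := div_mul_cancel₀ _ hpos.ne'
    nlinarith
  have hgrid : ∀ i : ℕ, i ≤ N → 0 ≤ (i : ℝ) * h ∧ (i : ℝ) * h + h ≤ T := by
    intro i hi
    have hcast : (i : ℝ) ≤ (N : ℝ) := Nat.cast_le.2 hi
    constructor
    · positivity
    · have : (i : ℝ) * h ≤ (N : ℝ) * h := by nlinarith
      have hδh : h + h = δ := by rw [hhdef]; ring
      nlinarith
  -- eventual estimates at grid points
  have hev : ∀ᶠ n in atTop, ∀ i ∈ Finset.range (N + 1),
      ξn n ((i : ℝ) * h) < ξ ((i : ℝ) * h + h) ∧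
      (1 ≤ i → ξ ((i : ℝ) * h - h) < ξn n ((i : ℝ) * h)) := by
    rw [Filter.eventually_all_finset]
    intro i hi
    have hiN : i ≤ N := Nat.lt_succ_iff.1 (Finset.mem_range.1 hi)
    obtain ⟨hg0, hgT⟩ := hgrid i hiN
    have hmemg : (i : ℝ) * h ∈ Set.Icc (0:ℝ) T := ⟨hg0, by linarith⟩
    have hmemg' : (i : ℝ) * h + h ∈ Set.Icc (0:ℝ) T := ⟨by linarith, hgT⟩
    have hA : ∀ᶠ n in atTop, ξn n ((i : ℝ) * h) < ξ ((i : ℝ) * h + h) :=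
      (hconv _ hmemg).eventually_lt_const
        (hξ_strict hmemg hmemg' (by linarith))
    by_cases h1 : 1 ≤ i
    · have hi1 : (1:ℝ) ≤ (i:ℝ) := by exact_mod_cast h1
      have hmemg'' : (i : ℝ) * h - h ∈ Set.Icc (0:ℝ) T := by
        constructor
        · nlinarith
        · linarith [hmemg.2, hpos.le]
      have hB : ∀ᶠ n in atTop, ξ ((i : ℝ) * h - h) < ξn n ((i : ℝ) * h) :=
        (hconv _ hmemg).eventually_const_lt
          (hξ_strict hmemg'' hmemg (by linarith))
      filter_upwards [hA, hB] with n hA hB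
      exact ⟨hA, fun _ => hB⟩
    · filter_upwards [hA] with n hA
      exact ⟨hA, fun hc => absurd hc h1⟩
  filter_upwards [hev] with n hn t ht
  obtain ⟨ht0, htTε⟩ := ht
  have htT : t ≤ T := by linarith
  have htmem : t ∈ Set.Icc (0:ℝ) T := ⟨ht0, htT⟩
  -- the set defining ξinv
  set S : Set ℝ := {x ∈ Set.Icc (0 : ℝ) T | ξn n t ≤ ξ x} ∪ {T} with hSdef
  have hSne : S.Nonempty := ⟨T, Or.inr rfl⟩
  have hSbdd : BddBelow S := by
    refine ⟨0, ?_⟩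
    rintro x (⟨⟨hx0, _⟩, _⟩ | rfl)
    · exact hx0
    · exact hT.le
  have hξinv_nonneg : 0 ≤ ξinv (ξn n t) := by
    rw [hξinv]
    refine le_csInf hSne ?_
    rintro x (⟨⟨hx0, _⟩, _⟩ | rfl)
    · exact hx0
    · exact hT.le
  -- Upper bound: ξinv (ξn n t) ≤ t + δ
  have hupper : ξinv (ξn n t) ≤ t + δ := by
    set i : ℕ := ⌈t / h⌉₊ with hidef
    have hiN : i ≤ N := Nat.ceil_le_ceil (by gcongr)
    have hb1 : t ≤ (i : ℝ) * h := by
      have := Nat.le_ceil (t / h)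
      rw [div_le_iff₀ hpos] at this
      exact this
    have hb2 : (i : ℝ) * h ≤ t + h := by
      have h1 : (i : ℝ) < t / h + 1 := Nat.ceil_lt_add_one (div_nonneg ht0 hpos.le)
      have h2 : t / h * h = t := div_mul_cancel₀ _ hpos.ne'
      nlinarith
    obtain ⟨hg0, hgT⟩ := hgrid i hiN
    have hbmem : (i : ℝ) * h ∈ Set.Icc (0:ℝ) T := ⟨hg0, by linarith⟩
    have hA := (hn i (Finset.mem_range.2 (Nat.lt_succ_of_le hiN))).1
    have hmono : ξn n t ≤ ξn n ((i:ℝ) * h) := hξn_mono n htmem hbmem hb1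
    have hchain : ξn n t ≤ ξ ((i:ℝ) * h + h) := le_of_lt (lt_of_le_of_lt hmono hA)
    have hmemS : (i:ℝ) * h + h ∈ S := Or.inl ⟨⟨by linarith, hgT⟩, hchain⟩
    have hle : ξinv (ξn n t) ≤ (i:ℝ) * h + h := by
      rw [hξinv]; exact csInf_le hSbdd hmemS
    have hδh : h + h = δ := by rw [hhdef]; ring
    nlinarith
  -- Lower bound: t - δ ≤ ξinv (ξn n t)
  have hlower : t - δ ≤ ξinv (ξn n t) := by
    by_cases htδ : t ≤ δ
    · linarith
    · push_neg at htδ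
      set i : ℕ := ⌊t / h⌋₊ with hidef
      have ha1 : (i : ℝ) * h ≤ t := by
        have := Nat.floor_le (div_nonneg ht0 hpos.le)
        rw [le_div_iff₀ hpos] at this
        exact this
      have ha2 : t - h ≤ (i : ℝ) * h := by
        have h1 : t / h < (i : ℝ) + 1 := Nat.lt_floor_add_one (t / h)
        have h2 : t / h * h = t := div_mul_cancel₀ _ hpos.ne'
        nlinarith
      have hδh : h + h = δ := by rw [hhdef]; ring
      have hi1 : 1 ≤ i := by
        by_contra hc
        push_neg at hc
        interval_cases i
        simp only [Nat.cast_zero, zero_mul] at ha2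
        linarith
      have hiN : i ≤ N := by
        have h1 : (i : ℝ) ≤ t / h := Nat.floor_le (div_nonneg ht0 hpos.le)
        have h2 : (T - ε) / h ≤ (N : ℝ) := Nat.le_ceil _
        have h3 : t / h ≤ (T - ε) / h := by gcongr
        exact_mod_cast le_trans h1 (le_trans h3 h2)
      obtain ⟨hg0, hgT⟩ := hgrid i hiN
      have hamem : (i : ℝ) * h ∈ Set.Icc (0:ℝ) T := ⟨hg0, by linarith⟩
      have hB := (hn i (Finset.mem_range.2 (Nat.lt_succ_of_le hiN))).2 hi1
      have hmono : ξn n ((i:ℝ) * h) ≤ ξn n t := hξn_mono n hamem htmem ha1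
      have htδ0 : 0 < t - δ := by linarith
      have htδmem : t - δ ∈ Set.Icc (0:ℝ) T := ⟨htδ0.le, by linarith⟩
      have hahmem : (i:ℝ) * h - h ∈ Set.Icc (0:ℝ) T := ⟨by linarith, by linarith⟩
      have hmono2 : ξ (t - δ) ≤ ξ ((i:ℝ) * h - h) :=
        hξ_mono htδmem hahmem (by linarith)
      have hkey : ξ (t - δ) < ξn n t := lt_of_le_of_lt hmono2 (lt_of_lt_of_le hB hmono)
      rw [hξinv]
      refine le_csInf hSne ?_
      rintro x (⟨⟨hx0, hxT⟩, hxξ⟩ | rfl)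
      · by_contra hc
        push_neg at hc
        have : ξ x < ξ (t - δ) := hξ_strict ⟨hx0, hxT⟩ htδmem hc
        linarith
      · linarith
  rw [Real.dist_eq, abs_sub_lt_iff]
  constructor <;> linarith
end
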